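/- Suppose assumptions (A1), (A2), (A3), (A4), (A6), and (A7) hold, and let ε̄₀ > 0 be as given by the smallness lemma (so that every solution with parameter ε < ε̄₀ satisfies sup|ε(u − u'')| < 1/2). Then for every fixed 0 < ε < ε̄₀ there exists a constant C̃ > 0, depending only on ε, γ, α, the constants of (A1), (A2), (A7), and on the C² norm of V, such that every solution (u, m) of Problem 1 with parameter ε satisfies both ∫₀¹ 1/m(x) dx ≤ C̃ and ∫₀¹ (m'(x)/m(x))² dx ≤ C̃. -/

import Mathlib

/-!
Integrating the Fokker–Planck equation over the torus gives `∫ m = 1 - ε ∫ u`, so the smallness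
of `ε (u - u'')` yields `∫ m ≤ 3/2`. Testing the Hamilton–Jacobi equation against `m` and the
Fokker–Planck equation against `u` and subtracting, (A2) bounds `∫ m^(α+1)` by
`∫ u + ∫ V m + C̃₁ ∫ m`; in the integrated Hamilton–Jacobi equation `∫ u` enters with the opposite
sign, so together with (A1) this bounds `∫ |u'|^γ`, and by (A7) with `γ < 2` also `∫ H'(u')²`.
Finally, divide the Fokker–Planck equation by `m` and integrate: on the torus `∫ m''/m = ∫ (m'/m)²`
and `∫ (H'(u') m)'/m = ∫ H'(u') m'/m`, so
`½ ∫ 1/m + ∫ (m'/m)² ≤ 1 - ∫ H'(u') m'/m`, and Young's inequality absorbs the last term.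
-/

open Set intervalIntegral

noncomputable section

/-- `f : ℝ → ℝ` is ½-Hölder continuous: there is `K ≥ 0` with
`|f x - f y| ≤ K * |x - y| ^ (1/2)` for all `x y`. -/
def IsHolderHalf (f : ℝ → ℝ) : Prop :=
  ∃ K : ℝ, 0 ≤ K ∧ ∀ x y : ℝ, |f x - f y| ≤ K * |x - y| ^ ((1 : ℝ) / 2)

/-- `f` is a 1-periodic function of class `C²` (a `C²` function on the torus `𝕋`). -/
def MemC2T (f : ℝ → ℝ) : Prop :=
  Function.Periodic f 1 ∧ ContDiff ℝ 2 f

/-- `f ∈ C^{2,1/2}(𝕋)`: 1-periodic, of class `C²`, with ½-Hölder continuous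
second derivative. -/
def MemC2HalfT (f : ℝ → ℝ) : Prop :=
  MemC2T f ∧ IsHolderHalf (deriv (deriv f))

/-- `(u, m)` is a solution of Problem 1 with Hamiltonian `H`, potential `V`,
exponent `α` and parameter `ε`: `u, m` are 1-periodic `C²` functions, `m > 0`
everywhere, and the system
`u - u'' + H(u') + V = m^α + ε (m - m'')`,
`m - m'' - (H'(u') m)' = 1 - ε (u - u'')`
holds pointwise. -/
def SolvesMFG (H V : ℝ → ℝ) (α ε : ℝ) (u m : ℝ → ℝ) : Prop :=
  MemC2T u ∧ MemC2T m ∧ (∀ x, 0 < m x) ∧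
  (∀ x : ℝ, u x - deriv (deriv u) x + H (deriv u x) + V x
      = m x ^ α + ε * (m x - deriv (deriv m) x)) ∧
  (∀ x : ℝ, m x - deriv (deriv m) x
      - deriv (fun y => deriv H (deriv u y) * m y) x
      = 1 - ε * (u x - deriv (deriv u) x))


open Function

section PeriodicCalculus

theorem Function.Periodic.deriv {𝕜 F : Type*} [NontriviallyNormedField 𝕜] [NormedAddCommGroup F]
    [NormedSpace 𝕜 F] {f : 𝕜 → F} {T : 𝕜} (hf : Periodic f T) : Periodic (deriv f) T := fun x => by
  rw [← deriv_comp_add_const, show (fun y => f (y + T)) = f from funext hf]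

variable {E : Type*} [NormedAddCommGroup E] [NormedSpace ℝ E] [CompleteSpace E] {T : ℝ}

theorem integral_eq_zero_of_hasDerivAt_of_periodic {F f : ℝ → E}
    (hF : ∀ x, HasDerivAt F (f x) x) (hf : Continuous f) (hp : Periodic F T) :
    ∫ x in 0..T, f x = 0 := by
  rw [integral_eq_sub_of_hasDerivAt (fun x _ => hF x) (hf.intervalIntegrable 0 T),
    ← zero_add T, hp, sub_self]

theorem integral_deriv_eq_zero_of_periodic {f : ℝ → E} (hf : ContDiff ℝ 1 f) (hp : Periodic f T) :
    ∫ x in 0..T, deriv f x = 0 :=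
  integral_eq_zero_of_hasDerivAt_of_periodic
    (fun x => (hf.differentiable one_ne_zero x).hasDerivAt) (hf.continuous_deriv le_rfl) hp

variable {f g : ℝ → ℝ}

theorem integral_mul_deriv_eq_neg_of_periodic (hf : ContDiff ℝ 1 f) (hg : ContDiff ℝ 1 g)
    (hpf : Periodic f T) (hpg : Periodic g T) :
    ∫ x in 0..T, f x * deriv g x = -∫ x in 0..T, deriv f x * g x := by
  rw [integral_mul_deriv_eq_deriv_mul (fun x _ => (hf.differentiable one_ne_zero x).hasDerivAt)
    (fun x _ => (hg.differentiable one_ne_zero x).hasDerivAt)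
    ((hf.continuous_deriv le_rfl).intervalIntegrable 0 T)
    ((hg.continuous_deriv le_rfl).intervalIntegrable 0 T), ← zero_add T, hpf, hpg]
  ring

theorem integral_deriv_deriv_div_eq_integral_sq_of_periodic (hf : ContDiff ℝ 2 f)
    (hf0 : ∀ x, f x ≠ 0) (hp : Periodic f T) :
    ∫ x in 0..T, deriv (deriv f) x / f x = ∫ x in 0..T, (deriv f x / f x) ^ 2 := by
  have hf' : ContDiff ℝ 1 (deriv f) := hf.deriv'
  have hf1 : ContDiff ℝ 1 f := hf.of_le one_le_two
  have cf := hf.continuous; have cf' := hf'.continuous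
  have cf'' := hf'.continuous_deriv le_rfl
  have hlog : ∫ x in 0..T, (deriv (deriv f) x / f x - (deriv f x / f x) ^ 2) = 0 := by
    refine integral_eq_zero_of_hasDerivAt_of_periodic (F := fun x => deriv f x / f x)
      (fun x => ?_) (by fun_prop (disch := assumption)) (fun x => by simp only [hp x, hp.deriv x])
    refine ((hf'.differentiable one_ne_zero x).hasDerivAt.fun_div
      (hf1.differentiable one_ne_zero x).hasDerivAt (hf0 x)).congr_deriv ?_
    field_simp [hf0 x]
  simpa (disch := apply Continuous.intervalIntegrable; fun_prop (disch := assumption)) only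
    [integral_sub, sub_eq_zero] using hlog

theorem integral_deriv_mul_div_eq_of_periodic (hg : ContDiff ℝ 1 g) (hf : ContDiff ℝ 1 f)
    (hf0 : ∀ x, f x ≠ 0) (hpg : Periodic g T) :
    ∫ x in 0..T, deriv (fun y => g y * f y) x / f x = ∫ x in 0..T, g x * (deriv f x / f x) := by
  have cg := hg.continuous; have cf := hf.continuous
  have cg' := hg.continuous_deriv le_rfl; have cf' := hf.continuous_deriv le_rfl
  have hpt (x : ℝ) :
      deriv (fun y => g y * f y) x / f x = deriv g x + g x * (deriv f x / f x) := by
    rw [deriv_fun_mul (hg.differentiable one_ne_zero x) (hf.differentiable one_ne_zero x)]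
    field_simp [hf0 x]
  simp (disch := apply Continuous.intervalIntegrable; fun_prop (disch := assumption)) only
    [hpt, integral_add, integral_deriv_eq_zero_of_periodic hg hpg, zero_add]

theorem abs_mul_integral_le_of_periodic {u : ℝ → ℝ} {ε c : ℝ} (hu : ContDiff ℝ 2 u)
    (hp : Periodic u T) (h : ∀ x, |ε * (u x - deriv (deriv u) x)| ≤ c) :
    |ε * ∫ x in 0..T, u x| ≤ c * |T| := by
  have cu := hu.continuous; have cu'' := hu.deriv'.continuous_deriv le_rfl
  have hmean : ε * ∫ x in 0..T, u x = ∫ x in 0..T, ε * (u x - deriv (deriv u) x) := by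
    simp (disch := apply Continuous.intervalIntegrable; fun_prop) only [integral_const_mul,
      integral_sub, integral_deriv_eq_zero_of_periodic hu.deriv' hp.deriv, sub_zero]
  simpa [hmean] using norm_integral_le_of_norm_le_const (a := 0) (b := T)
    fun x _ => (Real.norm_eq_abs _).trans_le (h x)

end PeriodicCalculus

section Growth

theorem rpow_le_one_add_rpow {t a b : ℝ} (ht : 0 ≤ t) (ha : 0 ≤ a) (hab : a ≤ b) :
    t ^ a ≤ 1 + t ^ b := by
  rcases le_or_gt t 1 with h | h
  · linarith [Real.rpow_le_one ht h ha, Real.rpow_nonneg ht b]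
  · linarith [Real.rpow_le_rpow_of_exponent_le h.le hab]

theorem sq_le_of_abs_le_mul_one_add_rpow {y p C γ : ℝ} (hγ : 1 ≤ γ) (hγ2 : γ ≤ 2)
    (h : |y| ≤ C * (1 + |p| ^ (γ - 1))) : y ^ 2 ≤ 2 * C ^ 2 * (2 + |p| ^ γ) := by
  set s := |p| ^ (γ - 1)
  have hs : s ^ 2 ≤ 1 + |p| ^ γ := by
    rw [← Real.rpow_natCast, ← Real.rpow_mul (abs_nonneg p)]
    exact rpow_le_one_add_rpow (abs_nonneg p) (by push_cast; linarith) (by push_cast; linarith)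
  calc y ^ 2 = |y| ^ 2 := (sq_abs y).symm
    _ ≤ (C * (1 + s)) ^ 2 := pow_le_pow_left₀ (abs_nonneg y) h 2
    _ ≤ C ^ 2 * (2 * (1 + s ^ 2)) := by
      rw [mul_pow]; gcongr; nlinarith [sq_nonneg (1 - s)]
    _ ≤ 2 * C ^ 2 * (2 + |p| ^ γ) := by nlinarith [sq_nonneg C]

theorem integral_sq_comp_le_of_growth {G w : ℝ → ℝ} {C γ : ℝ} (hG : Continuous G)
    (hw : Continuous w) (hγ : 1 ≤ γ) (hγ2 : γ ≤ 2) (hgrowth : ∀ p, |G p| ≤ C * (1 + |p| ^ (γ - 1))) :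
    ∫ x in 0..1, G (w x) ^ 2 ≤ 2 * C ^ 2 * (2 + ∫ x in 0..1, |w x| ^ γ) := by
  have cwγ : Continuous fun x => |w x| ^ γ := hw.abs.rpow_const fun _ => Or.inr (by linarith)
  calc ∫ x in 0..1, G (w x) ^ 2 ≤ ∫ x in 0..1, 2 * C ^ 2 * (2 + |w x| ^ γ) :=
        integral_mono_on zero_le_one ((by fun_prop : Continuous _).intervalIntegrable 0 1)
          ((by fun_prop : Continuous _).intervalIntegrable 0 1)
          fun x _ => sq_le_of_abs_le_mul_one_add_rpow hγ hγ2 (hgrowth (w x))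
    _ = 2 * C ^ 2 * (2 + ∫ x in 0..1, |w x| ^ γ) := by
      rw [integral_const_mul, integral_add intervalIntegrable_const
        (cwγ.intervalIntegrable 0 1)]
      simp

end Growth

namespace SolvesMFG

variable {H V : ℝ → ℝ} {α ε : ℝ} {u m : ℝ → ℝ}

theorem continuous_derivs (hs : SolvesMFG H V α ε u m) :
    Continuous u ∧ Continuous (deriv u) ∧ Continuous (deriv (deriv u)) ∧
      Continuous m ∧ Continuous (deriv m) ∧ Continuous (deriv (deriv m)) := by
  obtain ⟨⟨-, hu⟩, ⟨-, hm⟩, -⟩ := hs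
  exact ⟨hu.continuous, hu.continuous_deriv one_le_two, hu.deriv'.continuous_deriv le_rfl,
    hm.continuous, hm.continuous_deriv one_le_two, hm.deriv'.continuous_deriv le_rfl⟩

theorem contDiff_flux (hs : SolvesMFG H V α ε u m) (hH : ContDiff ℝ 2 H) :
    ContDiff ℝ 1 (fun y => deriv H (deriv u y) * m y) := by
  obtain ⟨⟨-, hu⟩, ⟨-, hm⟩, -⟩ := hs
  exact (hH.deriv'.comp hu.deriv').mul (hm.of_le one_le_two)

theorem periodic_flux (hs : SolvesMFG H V α ε u m) :
    Periodic (fun y => deriv H (deriv u y) * m y) 1 := by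
  obtain ⟨⟨hup, -⟩, ⟨hmp, -⟩, -⟩ := hs
  exact fun x => by simp only [hup.deriv x, hmp x]

theorem integral_m_eq (hs : SolvesMFG H V α ε u m) (hH : ContDiff ℝ 2 H) :
    ∫ x in 0..1, m x = 1 - ε * ∫ x in 0..1, u x := by
  obtain ⟨cu, cu', cu'', cm, cm', cm''⟩ := hs.continuous_derivs
  have hflux := hs.contDiff_flux hH
  have hpflux := hs.periodic_flux
  have cflux' := hflux.continuous_deriv le_rfl
  obtain ⟨⟨hup, hu⟩, ⟨hmp, hm⟩, -, -, hFP⟩ := hs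
  have h := integral_congr (μ := MeasureTheory.volume) (a := 0) (b := 1) fun x _ => hFP x
  simp (disch := apply Continuous.intervalIntegrable; fun_prop) only
    [integral_sub, integral_const_mul, integral_const,
    integral_deriv_eq_zero_of_periodic hm.deriv' hmp.deriv,
    integral_deriv_eq_zero_of_periodic hu.deriv' hup.deriv,
    integral_deriv_eq_zero_of_periodic hflux hpflux] at h
  simpa using h

theorem integral_hj (hs : SolvesMFG H V α ε u m) (hH : Continuous H) (hV : Continuous V) :
    (∫ x in 0..1, u x) + (∫ x in 0..1, H (deriv u x)) + (∫ x in 0..1, V x)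
      = (∫ x in 0..1, m x ^ α) + ε * ∫ x in 0..1, m x := by
  obtain ⟨cu, cu', cu'', cm, cm', cm''⟩ := hs.continuous_derivs
  obtain ⟨⟨hup, hu⟩, ⟨hmp, hm⟩, hpos, hHJ, -⟩ := hs
  have cmα := cm.rpow_const (p := α) fun x => Or.inl (hpos x).ne'
  have h := integral_congr (μ := MeasureTheory.volume) (a := 0) (b := 1) fun x _ => hHJ x
  simp (disch := apply Continuous.intervalIntegrable; fun_prop) only [integral_add, integral_sub,
    integral_const_mul, integral_deriv_eq_zero_of_periodic hu.deriv' hup.deriv,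
    integral_deriv_eq_zero_of_periodic hm.deriv' hmp.deriv, sub_zero] at h
  exact h

theorem integral_hj_mul_m (hs : SolvesMFG H V α ε u m) (hH : Continuous H) (hV : Continuous V) :
    (∫ x in 0..1, u x * m x) + (∫ x in 0..1, deriv u x * deriv m x)
      + (∫ x in 0..1, H (deriv u x) * m x) + (∫ x in 0..1, V x * m x)
      = (∫ x in 0..1, m x ^ (α + 1))
        + ε * ((∫ x in 0..1, m x ^ 2) + ∫ x in 0..1, deriv m x ^ 2) := by
  obtain ⟨cu, cu', cu'', cm, cm', cm''⟩ := hs.continuous_derivs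
  obtain ⟨⟨hup, hu⟩, ⟨hmp, hm⟩, hpos, hHJ, -⟩ := hs
  have cmα1 := cm.rpow_const (p := α + 1) fun x => Or.inl (hpos x).ne'
  have h : ∫ x in 0..1, (u x * m x - m x * deriv (deriv u) x + H (deriv u x) * m x + V x * m x)
      = ∫ x in 0..1, (m x ^ (α + 1) + ε * (m x * m x - m x * deriv (deriv m) x)) :=
    integral_congr fun x _ => by
      rw [Real.rpow_add_one (hpos x).ne']
      linear_combination m x * hHJ x
  have hm1 : ContDiff ℝ 1 m := hm.of_le one_le_two
  simp (disch := apply Continuous.intervalIntegrable; fun_prop) only [integral_add, integral_sub,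
    integral_const_mul, integral_mul_deriv_eq_neg_of_periodic hm1 hu.deriv' hmp hup.deriv,
    integral_mul_deriv_eq_neg_of_periodic hm1 hm.deriv' hmp hmp.deriv] at h
  simp only [sq, mul_comm (deriv m _) (deriv u _)] at h ⊢
  linarith

theorem integral_fp_mul_u (hs : SolvesMFG H V α ε u m) (hH : ContDiff ℝ 2 H) :
    (∫ x in 0..1, u x * m x) + (∫ x in 0..1, deriv u x * deriv m x)
      + (∫ x in 0..1, deriv u x * (deriv H (deriv u x) * m x))
      = (∫ x in 0..1, u x) - ε * ((∫ x in 0..1, u x ^ 2) + ∫ x in 0..1, deriv u x ^ 2) := by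
  obtain ⟨cu, cu', cu'', cm, cm', cm''⟩ := hs.continuous_derivs
  have hflux := hs.contDiff_flux hH
  have hpflux := hs.periodic_flux
  have cflux' := hflux.continuous_deriv le_rfl
  obtain ⟨⟨hup, hu⟩, ⟨hmp, hm⟩, -, -, hFP⟩ := hs
  have h : ∫ x in 0..1, (u x * m x - u x * deriv (deriv m) x
        - u x * deriv (fun y => deriv H (deriv u y) * m y) x)
      = ∫ x in 0..1, (u x - ε * (u x * u x - u x * deriv (deriv u) x)) :=
    integral_congr fun x _ => by linear_combination u x * hFP x
  have hu1 : ContDiff ℝ 1 u := hu.of_le one_le_two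
  simp (disch := apply Continuous.intervalIntegrable; fun_prop) only [integral_sub,
    integral_const_mul, integral_mul_deriv_eq_neg_of_periodic hu1 hm.deriv' hup hmp.deriv,
    integral_mul_deriv_eq_neg_of_periodic hu1 hflux hup hpflux,
    integral_mul_deriv_eq_neg_of_periodic hu1 hu.deriv' hup hup.deriv] at h
  simp only [sq]
  linarith

theorem integral_rpow_succ_le (hs : SolvesMFG H V α ε u m) (hH : ContDiff ℝ 2 H)
    (hV : Continuous V) (hε : 0 ≤ ε) {c : ℝ} (hL : ∀ p, -c ≤ p * deriv H p - H p) :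
    ∫ x in 0..1, m x ^ (α + 1)
      ≤ (∫ x in 0..1, u x) + (∫ x in 0..1, V x * m x) + c * ∫ x in 0..1, m x := by
  obtain ⟨cu, cu', cu'', cm, cm', cm''⟩ := hs.continuous_derivs
  have ⟨_, _, hpos, _⟩ := hs
  have cH := hH.continuous; have cH' := hH.continuous_deriv one_le_two
  have hLm : -c * ∫ x in 0..1, m x
      ≤ (∫ x in 0..1, deriv u x * (deriv H (deriv u x) * m x))
        - ∫ x in 0..1, H (deriv u x) * m x := by
    rw [← integral_const_mul, ← integral_sub ((by fun_prop : Continuous _).intervalIntegrable 0 1)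
      ((by fun_prop : Continuous _).intervalIntegrable 0 1)]
    refine integral_mono_on zero_le_one ((by fun_prop : Continuous _).intervalIntegrable 0 1)
      ((by fun_prop : Continuous _).intervalIntegrable 0 1) fun x _ => ?_
    nlinarith [hL (deriv u x), hpos x]
  have hsq (f : ℝ → ℝ) : 0 ≤ ∫ x in 0..1, f x ^ 2 :=
    integral_nonneg zero_le_one fun x _ => sq_nonneg (f x)
  linarith [hs.integral_hj_mul_m cH hV, hs.integral_fp_mul_u hH,
    mul_nonneg hε (add_nonneg (hsq m) (hsq (deriv m))),
    mul_nonneg hε (add_nonneg (hsq u) (hsq (deriv u)))]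

theorem integral_fp_div_m (hs : SolvesMFG H V α ε u m) (hH : ContDiff ℝ 2 H) :
    ∫ x in 0..1, (1 - ε * (u x - deriv (deriv u) x)) / m x
      = 1 - (∫ x in 0..1, (deriv m x / m x) ^ 2)
        - ∫ x in 0..1, deriv H (deriv u x) * (deriv m x / m x) := by
  obtain ⟨cu, cu', cu'', cm, cm', cm''⟩ := hs.continuous_derivs
  have hflux := hs.contDiff_flux hH
  have cflux' := hflux.continuous_deriv le_rfl
  obtain ⟨⟨hup, hu⟩, ⟨hmp, hm⟩, hpos, -, hFP⟩ := hs
  have hm0 (x : ℝ) : m x ≠ 0 := (hpos x).ne'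
  have h : ∫ x in 0..1, (1 - deriv (deriv m) x / m x
        - deriv (fun y => deriv H (deriv u y) * m y) x / m x)
      = ∫ x in 0..1, (1 - ε * (u x - deriv (deriv u) x)) / m x :=
    integral_congr fun x _ => by rw [← hFP x]; field_simp [hm0 x]
  simp (disch := apply Continuous.intervalIntegrable; fun_prop (disch := assumption)) only
    [integral_sub, integral_deriv_deriv_div_eq_integral_sq_of_periodic hm hm0 hmp,
    integral_deriv_mul_div_eq_of_periodic (g := fun y => deriv H (deriv u y))
      (hH.deriv'.comp hu.deriv') (hm.of_le one_le_two) hm0 (fun x => congrArg _ (hup.deriv x))] at h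
  simpa using h.symm

theorem integral_m_le (hs : SolvesMFG H V α ε u m) (hH : ContDiff ℝ 2 H)
    (hsmall : ∀ x, |ε * (u x - deriv (deriv u) x)| ≤ 1 / 2) :
    ∫ x in 0..1, m x ≤ 3 / 2 := by
  rw [hs.integral_m_eq hH]
  obtain ⟨⟨hup, hu⟩, -⟩ := hs
  have h := abs_mul_integral_le_of_periodic hu hup hsmall
  linarith [(abs_le.mp h).1, abs_one (α := ℝ)]

theorem integral_inv_add_integral_sq_le (hs : SolvesMFG H V α ε u m) (hH : ContDiff ℝ 2 H)
    (hsmall : ∀ x, |ε * (u x - deriv (deriv u) x)| ≤ 1 / 2) :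
    (∫ x in 0..1, 1 / m x) + ∫ x in 0..1, (deriv m x / m x) ^ 2
      ≤ 2 + ∫ x in 0..1, deriv H (deriv u x) ^ 2 := by
  obtain ⟨cu, cu', cu'', cm, cm', cm''⟩ := hs.continuous_derivs
  have cH' := hH.continuous_deriv one_le_two
  have ⟨_, _, hpos, _⟩ := hs
  have hm0 (x : ℝ) : m x ≠ 0 := (hpos x).ne'
  have hhalf : 1 / 2 * ∫ x in 0..1, 1 / m x
      ≤ ∫ x in 0..1, (1 - ε * (u x - deriv (deriv u) x)) / m x := by
    rw [← integral_const_mul]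
    refine integral_mono_on zero_le_one
      ((by fun_prop (disch := assumption) : Continuous _).intervalIntegrable 0 1)
      ((by fun_prop (disch := assumption) : Continuous _).intervalIntegrable 0 1) fun x _ => ?_
    rw [mul_one_div]
    exact div_le_div_of_nonneg_right (by linarith [(abs_le.mp (hsmall x)).2]) (hpos x).le
  have hamgm : -∫ x in 0..1, deriv H (deriv u x) * (deriv m x / m x)
      ≤ ((∫ x in 0..1, deriv H (deriv u x) ^ 2) + ∫ x in 0..1, (deriv m x / m x) ^ 2) / 2 := by
    rw [← integral_neg, ← integral_add
      ((by fun_prop (disch := assumption) : Continuous _).intervalIntegrable 0 1)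
      ((by fun_prop (disch := assumption) : Continuous _).intervalIntegrable 0 1), ← integral_div]
    refine integral_mono_on zero_le_one
      ((by fun_prop (disch := assumption) : Continuous _).intervalIntegrable 0 1)
      ((by fun_prop (disch := assumption) : Continuous _).intervalIntegrable 0 1) fun x _ => ?_
    nlinarith [sq_nonneg (deriv H (deriv u x) + deriv m x / m x)]
  linarith [hs.integral_fp_div_m hH]

theorem integral_abs_deriv_rpow_le (hs : SolvesMFG H V α ε u m) (hH : ContDiff ℝ 2 H)
    (hV : Continuous V) (hα : 0 ≤ α) (hε : 0 ≤ ε) (hε1 : ε ≤ 1) {γ C₁ C₂ c K : ℝ} (hγ : 0 ≤ γ)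
    (hHlow : ∀ p, -C₁ + C₂ * |p| ^ γ ≤ H p) (hL : ∀ p, -c ≤ p * deriv H p - H p)
    (hc : 0 ≤ c) (hVK : ∀ x ∈ Icc (0 : ℝ) 1, |V x| ≤ K)
    (hsmall : ∀ x, |ε * (u x - deriv (deriv u) x)| ≤ 1 / 2) :
    C₂ * ∫ x in 0..1, |deriv u x| ^ γ ≤ C₁ + 1 + K + 3 / 2 * (K + c + 1) := by
  obtain ⟨cu, cu', cu'', cm, cm', cm''⟩ := hs.continuous_derivs
  have cH := hH.continuous
  have ⟨_, _, hpos, _⟩ := hs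
  have cmα := cm.rpow_const (p := α) fun x => Or.inl (hpos x).ne'
  have cmα1 := cm.rpow_const (p := α + 1) fun x => Or.inl (hpos x).ne'
  have cuγ := cu'.abs.rpow_const (p := γ) fun _ => Or.inr hγ
  have hK : 0 ≤ K := (abs_nonneg _).trans (hVK 0 (by simp))
  have hHint : -C₁ + C₂ * ∫ x in 0..1, |deriv u x| ^ γ ≤ ∫ x in 0..1, H (deriv u x) := by
    have h := integral_mono_on (μ := MeasureTheory.volume) zero_le_one
      ((by fun_prop : Continuous fun x => -C₁ + C₂ * |deriv u x| ^ γ).intervalIntegrable 0 1)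
      ((by fun_prop : Continuous fun x => H (deriv u x)).intervalIntegrable 0 1)
      fun x _ => hHlow (deriv u x)
    simpa [integral_add, integral_const_mul, cuγ.intervalIntegrable] using h
  have hVint : -K ≤ ∫ x in 0..1, V x := by
    simpa using integral_mono_on (μ := MeasureTheory.volume) zero_le_one intervalIntegrable_const
      (hV.intervalIntegrable 0 1) fun x hx => neg_le_of_abs_le (hVK x hx)
  have hVm : ∫ x in 0..1, V x * m x ≤ K * ∫ x in 0..1, m x := by
    rw [← integral_const_mul]
    exact integral_mono_on zero_le_one ((by fun_prop : Continuous _).intervalIntegrable 0 1)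
      ((by fun_prop : Continuous _).intervalIntegrable 0 1)
      fun x hx => mul_le_mul_of_nonneg_right (le_of_abs_le (hVK x hx)) (hpos x).le
  have hrpow : ∫ x in 0..1, m x ^ α ≤ 1 + ∫ x in 0..1, m x ^ (α + 1) := by
    have h := integral_mono_on (μ := MeasureTheory.volume) zero_le_one
      ((by fun_prop : Continuous fun x => m x ^ α).intervalIntegrable 0 1)
      ((by fun_prop : Continuous fun x => 1 + m x ^ (α + 1)).intervalIntegrable 0 1)
      fun x _ => rpow_le_one_add_rpow (hpos x).le hα (by linarith)
    simpa [integral_add, cmα1.intervalIntegrable] using h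
  have hmass := mul_le_mul_of_nonneg_left (hs.integral_m_le hH hsmall)
    (by positivity : 0 ≤ K + c + ε)
  linarith [hs.integral_hj cH hV, hs.integral_rpow_succ_le hH hV hε hL]

end SolvesMFG

theorem integral_bounds_on_inv_m_general
    (α : ℝ) (hα : 0 < α)
    (H V : ℝ → ℝ) (hH : ContDiff ℝ 2 H)
    (hVcont : Continuous V)
    (γ C1 C2 C3 : ℝ) (hγ : 1 < γ) (hC1 : 0 < C1) (hC2 : 0 < C2)
    (hA1 : ∀ p : ℝ, -C1 + C2 * |p| ^ γ ≤ H p ∧ H p ≤ C1 + C3 * |p| ^ γ)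
    (tC1 tC2 tC3 : ℝ) (htC1 : 0 < tC1) (htC2 : 0 < tC2)
    (hA2 : ∀ p : ℝ, -tC1 + tC2 * |p| ^ γ ≤ p * deriv H p - H p ∧
        p * deriv H p - H p ≤ tC1 + tC3 * |p| ^ γ)
    (hA6 : γ < 2)
    (Cbar : ℝ)
    (hA7 : ∀ p : ℝ, |deriv H p| ≤ Cbar * (1 + |p| ^ (γ - 1)))
    (εbar₀ : ℝ)
    (hsmall : ∀ ε : ℝ, 0 < ε → ε ≤ 1 → ε < εbar₀ →
      ∀ u m : ℝ → ℝ, SolvesMFG H V α ε u m →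
        ∀ x : ℝ, |ε * (u x - deriv (deriv u) x)| < 1 / 2) :
    ∀ ε : ℝ, 0 < ε → ε ≤ 1 → ε < εbar₀ →
      ∃ Ct > 0, ∀ u m : ℝ → ℝ, SolvesMFG H V α ε u m →
        (∫ x in (0:ℝ)..1, 1 / m x) ≤ Ct ∧
        (∫ x in (0:ℝ)..1, (deriv m x / m x) ^ 2) ≤ Ct := by
  obtain ⟨K, hK⟩ := (isCompact_Icc (a := (0 : ℝ)) (b := 1)).exists_bound_of_continuousOn
    hVcont.continuousOn
  have hK0 : 0 ≤ K := (norm_nonneg _).trans (hK 0 (by simp))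
  intro ε hε hε1 hεb
  set B := (C1 + 1 + K + 3 / 2 * (K + tC1 + 1)) / C2
  have hB : 0 ≤ B := by positivity
  refine ⟨2 + 2 * Cbar ^ 2 * (2 + B), by positivity, fun u m hs => ?_⟩
  have hsmall' (x : ℝ) : |ε * (u x - deriv (deriv u) x)| ≤ 1 / 2 :=
    (hsmall ε hε hε1 hεb u m hs x).le
  have hgrad : ∫ x in (0:ℝ)..1, |deriv u x| ^ γ ≤ B := by
    rw [le_div_iff₀ hC2, mul_comm]
    refine hs.integral_abs_deriv_rpow_le hH hVcont hα.le hε.le hε1 (by linarith)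
      (fun p => (hA1 p).1) (fun p => ?_) htC1.le (fun x hx => by simpa using hK x hx) hsmall'
    nlinarith [(hA2 p).1, Real.rpow_nonneg (abs_nonneg p) γ]
  have hflux := integral_sq_comp_le_of_growth (hH.continuous_deriv one_le_two)
    hs.continuous_derivs.2.1
    hγ.le hA6.le hA7
  have ⟨_, _, hpos, _⟩ := hs
  have hinv : 0 ≤ ∫ x in (0:ℝ)..1, 1 / m x :=
    integral_nonneg zero_le_one fun x _ => one_div_nonneg.mpr (hpos x).le
  have hlog : 0 ≤ ∫ x in (0:ℝ)..1, (deriv m x / m x) ^ 2 :=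
    integral_nonneg zero_le_one fun x _ => sq_nonneg _
  have hmain := hs.integral_inv_add_integral_sq_le hH hsmall'
  have hgrad' := mul_le_mul_of_nonneg_left hgrad (sq_nonneg Cbar)
  constructor <;> linarith

/-- Under assumptions (A1)–(A4), (A6), (A7), if `ε̄₀ > 0` is
such that every solution of Problem 1 with parameter `ε < ε̄₀` satisfies
`sup |ε (u - u'')| < 1/2`, then for every fixed `0 < ε < ε̄₀` there is a
constant `C̃ > 0` such that every solution `(u, m)` of Problem 1 with
parameter `ε` satisfies `∫₀¹ 1/m ≤ C̃` and `∫₀¹ (m'/m)² ≤ C̃`. -/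
theorem integral_bounds_on_inv_m
    (α : ℝ) (hα : 0 < α)
    (H V : ℝ → ℝ) (hH : ContDiff ℝ 2 H)
    (hVcont : Continuous V) (hVper : Function.Periodic V 1)
    (γ C1 C2 C3 : ℝ) (hγ : 1 < γ) (hC1 : 0 < C1) (hC2 : 0 < C2) (hC3 : 0 < C3)
    (hA1 : ∀ p : ℝ, -C1 + C2 * |p| ^ γ ≤ H p ∧ H p ≤ C1 + C3 * |p| ^ γ)
    (tC1 tC2 tC3 : ℝ) (htC1 : 0 < tC1) (htC2 : 0 < tC2) (htC3 : 0 < tC3)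
    (hA2 : ∀ p : ℝ, -tC1 + tC2 * |p| ^ γ ≤ p * deriv H p - H p ∧
        p * deriv H p - H p ≤ tC1 + tC3 * |p| ^ γ)
    (hA3 : ContDiff ℝ 2 V)
    (hA4 : ConvexOn ℝ Set.univ H)
    (hA6 : γ < 2)
    (Cbar : ℝ) (hCbar : 0 < Cbar)
    (hA7 : ∀ p : ℝ, |deriv H p| ≤ Cbar * (1 + |p| ^ (γ - 1)))
    (εbar₀ : ℝ) (hεbar₀ : 0 < εbar₀)
    (hsmall : ∀ ε : ℝ, 0 < ε → ε ≤ 1 → ε < εbar₀ →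
      ∀ u m : ℝ → ℝ, SolvesMFG H V α ε u m →
        ∀ x : ℝ, |ε * (u x - deriv (deriv u) x)| < 1 / 2) :
    ∀ ε : ℝ, 0 < ε → ε ≤ 1 → ε < εbar₀ →
      ∃ Ct > 0, ∀ u m : ℝ → ℝ, SolvesMFG H V α ε u m →
        (∫ x in (0:ℝ)..1, 1 / m x) ≤ Ct ∧
        (∫ x in (0:ℝ)..1, (deriv m x / m x) ^ 2) ≤ Ct :=
  integral_bounds_on_inv_m_general α hα H V hH hVcont γ C1 C2 C3 hγ hC1 hC2 hA1 tC1 tC2 tC3 htC1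
    htC2 hA2 hA6 Cbar hA7 εbar₀ hsmall
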